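/- Let f : ℝⁿ × ℝᵐ → ℝⁿ, A : ℝⁿ × ℝᵐ → ℝ, s, T : ℝⁿ → ℝ, and let V : ℝⁿ → ℝ be continuously differentiable. Suppose: (i) {x | T(x) ≥ 0} ⊆ {x | V(x) ≤ 1}; (ii) {x | V(x) ≤ 1} ⊆ {x | s(x) ≥ 0}; (iii) for every x with V(x) = 1 and every a with A(x,a) ≥ 0, ∇V(x) · f(x,a) < 0. Then for every differentiable trajectory x : [0,∞) → ℝⁿ and every signal a : [0,∞) → ℝᵐ with ẋ(t) = f(x(t), a(t)) and A(x(t), a(t)) ≥ 0 for all t ≥ 0, if T(x(0)) ≥ 0 then s(x(t)) ≥ 0 for all t ≥ 0. -/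

import Mathlib

/-! Along an admissible trajectory, `V ∘ x` has derivative `∇V(x) · f(x, a)`, which is
negative whenever `V ∘ x` touches the level `1`. A real function with this property cannot
cross the level upwards (Mathlib's fencing comparison with the constant barrier `1`), so the
trajectory stays in `{V ≤ 1} ⊆ 𝒮`. -/

theorem le_of_hasDerivAt_neg_of_eq {g g' : ℝ → ℝ} {c : ℝ}
    (hg : ∀ t, 0 ≤ t → HasDerivAt g (g' t) t) (h₀ : g 0 ≤ c)
    (hneg : ∀ t, 0 ≤ t → g t = c → g' t < 0) {t : ℝ} (ht : 0 ≤ t) : g t ≤ c :=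
  image_le_of_deriv_right_lt_deriv_boundary' (B := fun _ ↦ c) (B' := 0)
    (fun u hu ↦ (hg u hu.1).continuousAt.continuousWithinAt)
    (fun u hu ↦ (hg u hu.1).hasDerivWithinAt) h₀ continuousOn_const
    (fun _ _ ↦ hasDerivWithinAt_const _ _ _) (fun u hu ↦ hneg u hu.1) ⟨ht, le_rfl⟩

theorem sublevel_invariant_of_fderiv_neg_on_level
    {E : Type*} [NormedAddCommGroup E] [NormedSpace ℝ E]
    {V : E → ℝ} (hV : Differentiable ℝ V) {x v : ℝ → E} {c : ℝ}
    (hx : ∀ t, 0 ≤ t → HasDerivAt x (v t) t) (h₀ : V (x 0) ≤ c)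
    (hneg : ∀ t, 0 ≤ t → V (x t) = c → fderiv ℝ V (x t) (v t) < 0)
    {t : ℝ} (ht : 0 ≤ t) : V (x t) ≤ c :=
  le_of_hasDerivAt_neg_of_eq (g := V ∘ x)
    (fun u hu ↦ (hV (x u)).hasFDerivAt.comp_hasDerivAt u (hx u hu)) h₀ hneg ht

/-- Analytic core of Theorem 1: the sandwich `{T ≥ 0} ⊆ {V ≤ 1} ⊆ {s ≥ 0}` together
with strict decrease of `V` along `f(·,a)` on the boundary `{V = 1}` (for admissible
attacks `A(x,a) ≥ 0`) implies that trajectories starting in `{T ≥ 0}` stay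
in `{s ≥ 0}` for all `t ≥ 0`. -/
theorem safety_from_sandwich {n m : ℕ}
    (f : (Fin n → ℝ) → (Fin m → ℝ) → (Fin n → ℝ))
    (A : (Fin n → ℝ) → (Fin m → ℝ) → ℝ)
    (s T : (Fin n → ℝ) → ℝ)
    (V : (Fin n → ℝ) → ℝ) (hV : ContDiff ℝ 1 V)
    (hTV : {x : Fin n → ℝ | 0 ≤ T x} ⊆ {x : Fin n → ℝ | V x ≤ 1})
    (hVs : {x : Fin n → ℝ | V x ≤ 1} ⊆ {x : Fin n → ℝ | 0 ≤ s x})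
    (hdec : ∀ (x : Fin n → ℝ) (a : Fin m → ℝ),
      V x = 1 → 0 ≤ A x a → fderiv ℝ V x (f x a) < 0) :
    ∀ (x : ℝ → Fin n → ℝ) (a : ℝ → Fin m → ℝ),
      (∀ t : ℝ, 0 ≤ t → HasDerivAt x (f (x t) (a t)) t) →
      (∀ t : ℝ, 0 ≤ t → 0 ≤ A (x t) (a t)) →
      0 ≤ T (x 0) → ∀ t : ℝ, 0 ≤ t → 0 ≤ s (x t) := by
  intro x a hx ha hT₀ t ht
  exact hVs <| sublevel_invariant_of_fderiv_neg_on_level (hV.differentiable one_ne_zero) hx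
    (hTV hT₀) (fun u hu hu₁ ↦ hdec _ _ hu₁ (ha u hu)) ht
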